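/- arXiv:1609.04550 — 3 statements merged into one kernel-verified Lean document; each statement's English description precedes it below -/
import Mathlib

section
/- If an operator D on a Hilbert space satisfies the Ginsparg-Wilson relation D γ₅ + γ₅ D = D γ₅ D and the γ₅-hermiticity γ₅ D γ₅ = D†, where γ₅ is a self-adjoint involution, then D + D† = D† D = D D†; in particular D is normal. -/
/-!
Conjugating the Ginsparg-Wilson relation `Dγ₅ + γ₅D = Dγ₅D` by `γ₅` on the left, resp. on the
right, and using `γ₅² = 1` gives `D + γ₅Dγ₅ = (γ₅Dγ₅)D`, resp. `D + γ₅Dγ₅ = D(γ₅Dγ₅)`;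
γ₅-hermiticity identifies `γ₅Dγ₅` with `D†`.
-/

section GinspargWilson

variable {R : Type*} [Ring R] {g d : R}

theorem add_conj_eq_conj_mul_of_ginsparg_wilson (hg : g * g = 1)
    (hgw : d * g + g * d = d * g * d) : d + g * d * g = g * d * g * d :=
  calc d + g * d * g = g * (d * g + g * d) := by
        rw [mul_add, ← mul_assoc g g, hg, one_mul, ← mul_assoc, add_comm]
    _ = g * d * g * d := by rw [hgw]; simp only [mul_assoc]

theorem add_conj_eq_mul_conj_of_ginsparg_wilson (hg : g * g = 1)
    (hgw : d * g + g * d = d * g * d) : d + g * d * g = d * (g * d * g) :=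
  calc d + g * d * g = (d * g + g * d) * g := by
        rw [add_mul, mul_assoc d g g, hg, mul_one]
    _ = d * (g * d * g) := by rw [hgw]; simp only [mul_assoc]

end GinspargWilson

theorem ginsparg_wilson_normal_general (n : ℕ)
    (γ₅ D : EuclideanSpace ℂ (Fin n) →ₗ[ℂ] EuclideanSpace ℂ (Fin n))
    (hinv : γ₅ * γ₅ = 1)
    (hGW : D * γ₅ + γ₅ * D = D * γ₅ * D)
    (hherm : γ₅ * D * γ₅ = LinearMap.adjoint D) :
    D + LinearMap.adjoint D = LinearMap.adjoint D * D ∧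
      LinearMap.adjoint D * D = D * LinearMap.adjoint D := by
  rw [← hherm]
  have hleft := add_conj_eq_conj_mul_of_ginsparg_wilson hinv hGW
  have hright := add_conj_eq_mul_conj_of_ginsparg_wilson hinv hGW
  exact ⟨hleft, hleft.symm.trans hright⟩

/-- If an operator `D` on a finite-dimensional complex Hilbert space satisfies the
Ginsparg-Wilson relation `D γ₅ + γ₅ D = D γ₅ D` and γ₅-hermiticity `γ₅ D γ₅ = D†`,
where `γ₅` is a self-adjoint involution, then `D + D† = D† D = D D†`; in particular
`D` is normal. -/
theorem ginsparg_wilson_normal (n : ℕ)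
    (γ₅ D : EuclideanSpace ℂ (Fin n) →ₗ[ℂ] EuclideanSpace ℂ (Fin n))
    (hinv : γ₅ * γ₅ = 1) (hsa : LinearMap.adjoint γ₅ = γ₅)
    (hGW : D * γ₅ + γ₅ * D = D * γ₅ * D)
    (hherm : γ₅ * D * γ₅ = LinearMap.adjoint D) :
    D + LinearMap.adjoint D = LinearMap.adjoint D * D ∧
      LinearMap.adjoint D * D = D * LinearMap.adjoint D :=
  ginsparg_wilson_normal_general n γ₅ D hinv hGW hherm
end

section
/- For a subadditive multivariate entropy function S on ℕⁿ (i.e., S of a disjoint union of translated boxes is at most the sum), translation invariance implies that if S(k₁,...,kₙ)/(k₁⋯kₙ) is finite for some fixed box (k₁,...,kₙ) with all kᵢ ≥ 1, then limsup over aᵢ → ∞ of S(a₁,...,aₙ)/(a₁⋯aₙ) ≤ S(k₁,...,kₙ)/(k₁⋯kₙ); in particular the entropy density is finite. -/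
open Filter Finset

/-!
Write each side as `aᵢ = pᵢ kᵢ + qᵢ` with `pᵢ = aᵢ / kᵢ`, `qᵢ = aᵢ % kᵢ`. Subadditivity bounds
`S a` by `(∏ pᵢ) S k` plus `B` times the correction terms. Since `pᵢ kᵢ ≤ aᵢ`, the main term is
at most `(S k / ∏ kᵢ) ∏ aᵢ`; once every `aᵢ ≥ N`, each correction term misses a factor `aᵢ ≥ N`
and so is at most `(∏ aᵢ) / N`. Hence `S a / ∏ aᵢ ≤ S k / ∏ kᵢ + B n / N` eventually, for every `N`.
-/

section BoxProducts

variable {ι : Type*} [Fintype ι]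

theorem prod_div_mul_prod_le (a k : ι → ℕ) :
    (∏ i, a i / k i) * ∏ i, k i ≤ ∏ i, a i := by
  rw [← prod_mul_distrib]
  exact prod_le_prod' fun i _ => Nat.div_mul_le_self (a i) (k i)

theorem mul_sum_prod_erase_le [DecidableEq ι] {a p : ι → ℕ} {N : ℕ}
    (hN : ∀ i, N ≤ a i) (hp : ∀ i, p i ≤ a i) :
    N * ∑ i, ∏ j ∈ univ.erase i, p j ≤ Fintype.card ι * ∏ i, a i := by
  rw [mul_sum, ← smul_eq_mul, ← card_univ]
  refine sum_le_card_nsmul _ _ _ fun i _ => ?_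
  calc N * ∏ j ∈ univ.erase i, p j
      ≤ a i * ∏ j ∈ univ.erase i, a j :=
        Nat.mul_le_mul (hN i) (prod_le_prod' fun j _ => hp j)
    _ = ∏ j, a j := mul_prod_erase univ a (mem_univ i)

end BoxProducts

section Density

variable {ι : Type*} [Fintype ι] [DecidableEq ι] {S : (ι → ℕ) → ℝ} {k : ι → ℕ} {B : ℝ}

theorem le_of_box_subadditive (hk : ∀ i, 1 ≤ k i)
    (hsub : ∀ p q : ι → ℕ, (∀ i, q i ≤ k i - 1) →
      S (fun i => p i * k i + q i) ≤
        (∏ i, (p i : ℝ)) * S k + B * ∑ i, ∏ j ∈ univ.erase i, (p j : ℝ))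
    (a : ι → ℕ) :
    S a ≤ (∏ i, ((a i / k i : ℕ) : ℝ)) * S k +
      B * ∑ i, ∏ j ∈ univ.erase i, ((a j / k j : ℕ) : ℝ) := by
  have hq : ∀ i, a i % k i ≤ k i - 1 := fun i => by
    have := Nat.mod_lt (a i) (hk i)
    omega
  simpa only [Nat.div_add_mod'] using hsub (fun i => a i / k i) (fun i => a i % k i) hq

theorem div_prod_le_of_forall_ge (hpos : 0 ≤ S k) (hk : ∀ i, 1 ≤ k i) (hB : 0 ≤ B)
    (hsub : ∀ p q : ι → ℕ, (∀ i, q i ≤ k i - 1) →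
      S (fun i => p i * k i + q i) ≤
        (∏ i, (p i : ℝ)) * S k + B * ∑ i, ∏ j ∈ univ.erase i, (p j : ℝ))
    {N : ℕ} (hN0 : 0 < N) {a : ι → ℕ} (hN : ∀ i, N ≤ a i) :
    S a / ∏ i, (a i : ℝ) ≤ S k / ∏ i, (k i : ℝ) + B * Fintype.card ι / N := by
  have hkP : (0 : ℝ) < ∏ i, (k i : ℝ) := prod_pos fun i _ => by exact_mod_cast hk i
  have haP : (0 : ℝ) < ∏ i, (a i : ℝ) :=
    prod_pos fun i _ => by exact_mod_cast hN0.trans_le (hN i)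
  have hNR : (0 : ℝ) < N := by exact_mod_cast hN0
  have hmain : (∏ i, ((a i / k i : ℕ) : ℝ)) * S k ≤ (S k / ∏ i, (k i : ℝ)) * ∏ i, (a i : ℝ) := by
    have h : (∏ i, ((a i / k i : ℕ) : ℝ)) * ∏ i, (k i : ℝ) ≤ ∏ i, (a i : ℝ) := by
      exact_mod_cast prod_div_mul_prod_le a k
    rw [div_mul_eq_mul_div, le_div_iff₀ hkP, mul_right_comm, mul_comm (S k)]
    exact mul_le_mul_of_nonneg_right h hpos
  have hcorr : B * ∑ i, ∏ j ∈ univ.erase i, ((a j / k j : ℕ) : ℝ) ≤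
      B * Fintype.card ι / N * ∏ i, (a i : ℝ) := by
    have h : (N : ℝ) * ∑ i, ∏ j ∈ univ.erase i, ((a j / k j : ℕ) : ℝ) ≤
        Fintype.card ι * ∏ i, (a i : ℝ) := by
      exact_mod_cast mul_sum_prod_erase_le hN fun i => Nat.div_le_self (a i) (k i)
    rw [div_mul_eq_mul_div, le_div_iff₀ hNR, mul_assoc, mul_assoc, mul_comm _ (N : ℝ)]
    exact mul_le_mul_of_nonneg_left h hB
  rw [div_le_iff₀ haP, add_mul]
  exact (le_of_box_subadditive hk hsub a).trans (add_le_add hmain hcorr)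

end Density

theorem entropy_density_finite_general (n : ℕ) (S : (Fin n → ℕ) → ℝ)
    (hpos : ∀ a, 0 ≤ S a)
    (k : Fin n → ℕ) (hk : ∀ i, 1 ≤ k i) (B : ℝ) (hB : 0 ≤ B)
    (hsub : ∀ p q : Fin n → ℕ, (∀ i, q i ≤ k i - 1) →
      S (fun i => p i * k i + q i) ≤
        (∏ i, (p i : ℝ)) * S k +
          B * ∑ i, ∏ j ∈ Finset.univ.erase i, (p j : ℝ)) :
    Filter.limsup (fun a : Fin n → ℕ => S a / ∏ i, (a i : ℝ)) Filter.atTop ≤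
      S k / ∏ i, (k i : ℝ) := by
  have hcobdd : IsCoboundedUnder (· ≤ ·) atTop fun a : Fin n → ℕ => S a / ∏ i, (a i : ℝ) :=
    isCoboundedUnder_le_of_le _ fun a => div_nonneg (hpos a) (prod_nonneg fun i _ => by positivity)
  refine le_of_forall_pos_le_add fun ε hε => limsup_le_of_le hcobdd ?_
  obtain ⟨N, hN⟩ := exists_nat_gt (B * n / ε)
  have hN0 : 0 < N := by exact_mod_cast (div_nonneg (by positivity) hε.le).trans_lt hN
  have hNε : B * n / N ≤ ε := by
    rw [div_lt_iff₀ hε] at hN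
    rw [div_le_iff₀ (by exact_mod_cast hN0)]
    linarith
  filter_upwards [eventually_ge_atTop fun _ => N] with a ha
  have h := div_prod_le_of_forall_ge (hpos k) hk hB hsub hN0 ha
  rw [Fintype.card_fin] at h
  linarith

/-- For a monotone, translation-invariant-subadditive entropy function `S` on `ℕⁿ`
(`S` of a box of side `pᵢ kᵢ + qᵢ` is at most `(∏ pᵢ) S(k)` plus a lower-order
correction bounded by a sum of terms each missing at least one factor `pᵢ`), the
entropy density is finite: the limsup of `S(a)/(a₁⋯aₙ)` as all `aᵢ → ∞` is at most
`S(k)/(k₁⋯kₙ)`. -/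
theorem entropy_density_finite (n : ℕ) (S : (Fin n → ℕ) → ℝ)
    (hpos : ∀ a, 0 ≤ S a) (hmono : Monotone S)
    (k : Fin n → ℕ) (hk : ∀ i, 1 ≤ k i) (B : ℝ) (hB : 0 ≤ B)
    (hsub : ∀ p q : Fin n → ℕ, (∀ i, q i ≤ k i - 1) →
      S (fun i => p i * k i + q i) ≤
        (∏ i, (p i : ℝ)) * S k +
          B * ∑ i, ∏ j ∈ Finset.univ.erase i, (p j : ℝ)) :
    Filter.limsup (fun a : Fin n → ℕ => S a / ∏ i, (a i : ℝ)) Filter.atTop ≤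
      S k / ∏ i, (k i : ℝ) :=
  entropy_density_finite_general n S hpos k hk B hB hsub
end

section
/- The three monodromy conditions Σᵢ ρᵢ = 0, Σᵢ ρᵢ zᵢ = -2N, Σᵢ ρᵢ zᵢ² = -2Σᵢ zᵢ are invariant under the SL(2,ℝ) action zᵢ ↦ (Azᵢ+B)/(Czᵢ+D), ρᵢ ↦ ρᵢ(Czᵢ+D)² + 2C(Czᵢ+D) with AD - BC = 1. -/
/-- The three monodromy conditions `Σ ρᵢ = 0`, `Σ ρᵢ zᵢ = -2N`, `Σ ρᵢ zᵢ² = -2 Σ zᵢ`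
are invariant under the `SL(2,ℝ)` action `zᵢ ↦ (A zᵢ + B)/(C zᵢ + D)`,
`ρᵢ ↦ ρᵢ (C zᵢ + D)² + 2C (C zᵢ + D)` with `AD - BC = 1`. -/
theorem monodromy_conditions_sl2_invariant (N : ℕ)
    (z ρ : Fin (2 * N) → ℝ) (A B C D : ℝ)
    (hdet : A * D - B * C = 1) (hC : C ≠ 0)
    (hden : ∀ i, C * z i + D ≠ 0)
    (h1 : ∑ i, ρ i = 0)
    (h2 : ∑ i, ρ i * z i = -2 * (N : ℝ))
    (h3 : ∑ i, ρ i * z i ^ 2 = -2 * ∑ i, z i) :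
    (∑ i, (ρ i * (C * z i + D) ^ 2 + 2 * C * (C * z i + D)) = 0) ∧
      (∑ i, (ρ i * (C * z i + D) ^ 2 + 2 * C * (C * z i + D)) *
          ((A * z i + B) / (C * z i + D)) = -2 * (N : ℝ)) ∧
      (∑ i, (ρ i * (C * z i + D) ^ 2 + 2 * C * (C * z i + D)) *
          ((A * z i + B) / (C * z i + D)) ^ 2 =
        -2 * ∑ i, (A * z i + B) / (C * z i + D)) := by
  have hcard : ∑ _i : Fin (2 * N), (1 : ℝ) = 2 * (N : ℝ) := by
    simp [mul_comm]
  -- First condition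
  have c1 : ∑ i, (ρ i * (C * z i + D) ^ 2 + 2 * C * (C * z i + D)) = 0 := by
    have : ∑ i, (ρ i * (C * z i + D) ^ 2 + 2 * C * (C * z i + D)) =
        C ^ 2 * (∑ i, ρ i * z i ^ 2) + 2 * C * D * (∑ i, ρ i * z i) +
          D ^ 2 * (∑ i, ρ i) + 2 * C ^ 2 * (∑ i, z i) +
          2 * C * D * (∑ _i : Fin (2 * N), (1 : ℝ)) := by
      simp only [Finset.mul_sum, ← Finset.sum_add_distrib]
      exact Finset.sum_congr rfl fun i _ => by ring
    rw [this, h1, h2, h3, hcard]; ring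
  -- Second condition
  have c2 : ∑ i, (ρ i * (C * z i + D) ^ 2 + 2 * C * (C * z i + D)) *
      ((A * z i + B) / (C * z i + D)) = -2 * (N : ℝ) := by
    have e : ∀ i, (ρ i * (C * z i + D) ^ 2 + 2 * C * (C * z i + D)) *
        ((A * z i + B) / (C * z i + D)) =
        ρ i * (C * z i + D) * (A * z i + B) + 2 * C * (A * z i + B) := by
      intro i
      have hd := hden i
      field_simp
    rw [Finset.sum_congr rfl fun i _ => e i]
    have : ∑ i, (ρ i * (C * z i + D) * (A * z i + B) + 2 * C * (A * z i + B)) =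
        A * C * (∑ i, ρ i * z i ^ 2) + (A * D + B * C) * (∑ i, ρ i * z i) +
          B * D * (∑ i, ρ i) + 2 * A * C * (∑ i, z i) +
          2 * B * C * (∑ _i : Fin (2 * N), (1 : ℝ)) := by
      simp only [Finset.mul_sum, ← Finset.sum_add_distrib]
      exact Finset.sum_congr rfl fun i _ => by ring
    rw [this, h1, h2, h3, hcard]
    linear_combination (-2 * (N : ℝ)) * hdet
  -- Third condition
  have c3 : ∑ i, (ρ i * (C * z i + D) ^ 2 + 2 * C * (C * z i + D)) *
      ((A * z i + B) / (C * z i + D)) ^ 2 =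
      -2 * ∑ i, (A * z i + B) / (C * z i + D) := by
    have e : ∀ i, (ρ i * (C * z i + D) ^ 2 + 2 * C * (C * z i + D)) *
        ((A * z i + B) / (C * z i + D)) ^ 2 + 2 * ((A * z i + B) / (C * z i + D)) =
        ρ i * (A * z i + B) ^ 2 + 2 * A * (A * z i + B) := by
      intro i
      have hd := hden i
      set w := (A * z i + B) / (C * z i + D) with hwdef
      have hw : w * (C * z i + D) = A * z i + B := div_mul_cancel₀ _ hd
      have hkey : C * (A * z i + B) + 1 = A * (C * z i + D) := by linear_combination -hdet
      calc (ρ i * (C * z i + D) ^ 2 + 2 * C * (C * z i + D)) * w ^ 2 + 2 * w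
          = ρ i * (w * (C * z i + D)) ^ 2 + 2 * w * (C * (w * (C * z i + D)) + 1) := by ring
        _ = ρ i * (A * z i + B) ^ 2 + 2 * w * (C * (A * z i + B) + 1) := by rw [hw]
        _ = ρ i * (A * z i + B) ^ 2 + 2 * A * (w * (C * z i + D)) := by rw [hkey]; ring
        _ = ρ i * (A * z i + B) ^ 2 + 2 * A * (A * z i + B) := by rw [hw]
    have key : ∑ i, ((ρ i * (C * z i + D) ^ 2 + 2 * C * (C * z i + D)) *
        ((A * z i + B) / (C * z i + D)) ^ 2 + 2 * ((A * z i + B) / (C * z i + D))) = 0 := by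
      rw [Finset.sum_congr rfl fun i _ => e i]
      have : ∑ i, (ρ i * (A * z i + B) ^ 2 + 2 * A * (A * z i + B)) =
          A ^ 2 * (∑ i, ρ i * z i ^ 2) + 2 * A * B * (∑ i, ρ i * z i) +
            B ^ 2 * (∑ i, ρ i) + 2 * A ^ 2 * (∑ i, z i) +
            2 * A * B * (∑ _i : Fin (2 * N), (1 : ℝ)) := by
        simp only [Finset.mul_sum, ← Finset.sum_add_distrib]
        exact Finset.sum_congr rfl fun i _ => by ring
      rw [this, h1, h2, h3, hcard]; ring
    rw [Finset.sum_add_distrib, ← Finset.mul_sum] at key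
    linarith
  exact ⟨c1, c2, c3⟩
end
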